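/- arXiv:1207.1133 — 2 statements merged into one kernel-verified Lean document; each statement's English description precedes it below -/
import Mathlib

section
/- The inverse of the Vandermonde matrix V(x_0,...,x_N) has entries v_{ki} = (-1)^{N+k} · e_{N-k}(i)(x) / ∏_{j≠i} (x_i - x_j), where e_m(i)(x) denotes the m-th elementary symmetric polynomial in the variables x_0,...,x_N with x_i omitted. -/
/-!
The `i`-th column of the inverse Vandermonde matrix holds the coefficients of the Lagrange basis
polynomial `L_i = ∏_{j ≠ i} (X - x_j) / ∏_{j ≠ i} (x_i - x_j)`, since row `a` of the Vandermonde
matrix applied to it gives `L_i(x_a) = δ_{ai}`. Vieta's formulas express the coefficients of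
`∏_{j ≠ i} (X - x_j)` through the elementary symmetric polynomials of the `x_j`, `j ≠ i`.
-/

open Polynomial Finset

namespace Lagrange

theorem coeff_nodal {R ι : Type*} [CommRing R] (s : Finset ι) (v : ι → R) {k : ℕ}
    (hk : k ≤ #s) :
    (nodal s v).coeff k = (-1) ^ (#s - k) * ∑ t ∈ s.powersetCard (#s - k), ∏ j ∈ t, v j := by
  rw [nodal, Finset.prod, show (fun j => X - C (v j)) = (fun r => X - C r) ∘ v from rfl,
    ← Multiset.map_map, Multiset.prod_X_sub_C_coeff _ (by rwa [Multiset.card_map]),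
    Multiset.card_map, Finset.esymm_map_val]
  rfl

variable {F ι : Type*} [Field F] [DecidableEq ι] {s : Finset ι} {v : ι → F} {i : ι}

theorem basis_eq_C_nodalWeight_mul_nodal_erase (hi : i ∈ s) :
    Lagrange.basis s v i = C (nodalWeight s v i) * nodal (s.erase i) v := by
  rw [basis_eq_prod_sub_inv_mul_nodal_div hi, nodal_erase_eq_nodal_div hi]

theorem coeff_basis (hi : i ∈ s) {k : ℕ} (hk : k ≤ #(s.erase i)) :
    (Lagrange.basis s v i).coeff k = nodalWeight s v i * ((-1) ^ (#(s.erase i) - k) *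
      ∑ t ∈ (s.erase i).powersetCard (#(s.erase i) - k), ∏ j ∈ t, v j) := by
  rw [basis_eq_C_nodalWeight_mul_nodal_erase hi, coeff_C_mul, coeff_nodal _ _ hk]

end Lagrange

namespace Matrix

variable {K : Type*} [Field K] {n : ℕ}

noncomputable def lagrangeBasisCoeffs (v : Fin n → K) : Matrix (Fin n) (Fin n) K :=
  .of fun k i => (Lagrange.basis univ v i).coeff k

theorem lagrangeBasisCoeffs_apply (v : Fin n → K) (k i : Fin n) :
    lagrangeBasisCoeffs v k i = (Lagrange.basis univ v i).coeff k :=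
  rfl

theorem vandermonde_mul_lagrangeBasisCoeffs {v : Fin n → K} (hv : Function.Injective v) :
    vandermonde v * lagrangeBasisCoeffs v = 1 := by
  ext a i
  have hdeg : (Lagrange.basis univ v i).natDegree < n := by
    rw [Lagrange.natDegree_basis hv.injOn (mem_univ i), card_fin]
    exact Nat.sub_lt i.pos one_pos
  have heval :
      (vandermonde v * lagrangeBasisCoeffs v) a i = (Lagrange.basis univ v i).eval (v a) := by
    rw [mul_apply, eval_eq_sum_range' hdeg, ← Fin.sum_univ_eq_sum_range]
    exact sum_congr rfl fun k _ => mul_comm _ _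
  rw [heval, one_apply]
  split_ifs with hai
  · subst hai
    exact Lagrange.eval_basis_self hv.injOn (mem_univ a)
  · exact Lagrange.eval_basis_of_ne (Ne.symm hai) (mem_univ a)

theorem inv_vandermonde {v : Fin n → K} (hv : Function.Injective v) :
    (vandermonde v)⁻¹ = lagrangeBasisCoeffs v :=
  inv_eq_right_inv (vandermonde_mul_lagrangeBasisCoeffs hv)

end Matrix

theorem neg_one_pow_sub_eq_neg_one_pow_add {R : Type*} [Monoid R] [HasDistribNeg R] {m k : ℕ}
    (hk : k ≤ m) : (-1 : R) ^ (m - k) = (-1) ^ (m + k) := by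
  rw [show m + k = m - k + 2 * k by omega, pow_add, pow_mul, neg_one_sq, one_pow, mul_one]

/-- Explicit formula for the entries of the inverse Vandermonde matrix in terms of
elementary symmetric polynomials with one variable omitted. -/
theorem stmt_1 (N : ℕ) (x : Fin (N + 1) → ℝ) (hx : Function.Injective x)
    (V : Matrix (Fin (N + 1)) (Fin (N + 1)) ℝ) (hV : ∀ i k, V i k = x i ^ (k : ℕ))
    (k i : Fin (N + 1)) :
    V⁻¹ k i = (-1 : ℝ) ^ (N + (k : ℕ)) *
      (∑ S ∈ (Finset.univ.erase i).powersetCard (N - (k : ℕ)), ∏ j ∈ S, x j) /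
      ∏ j ∈ Finset.univ.erase i, (x i - x j) := by
  have hVx : V = Matrix.vandermonde x := Matrix.ext hV
  have hcard : #(univ.erase i) = N := by
    rw [card_erase_of_mem (mem_univ i), card_fin, Nat.add_sub_cancel]
  have hk : (k : ℕ) ≤ N := Nat.lt_succ_iff.mp k.isLt
  rw [hVx, Matrix.inv_vandermonde hx, Matrix.lagrangeBasisCoeffs_apply,
    Lagrange.coeff_basis (mem_univ i) (hcard.symm ▸ hk), hcard,
    neg_one_pow_sub_eq_neg_one_pow_add hk, Lagrange.nodalWeight,
    prod_inv_distrib, div_eq_mul_inv, mul_comm]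
end

section
/- Let X be a finite connected graph with no leaf vertices and let U ⊆ X be a proper closed subgraph obtained as a union of connected subsets, each missing at least one interior point of some edge. If χ denotes the Euler characteristic, then χ(X) < χ(U). Equivalently, if A is a good covering of X (∂X = ∅) with union |A|, then χ(N(A)) = χ(X) implies |A| = X. -/
/-!
Remove the edges of `U` from `X`, leaving the graph `Y = X \ U`. A vertex missing from `U` keeps
all of its `X`-edges in `Y`, so it has `Y`-degree at least 2; by connectedness some `Y`-edge also
ends at a vertex of `U`. The handshake lemma then gives `|E(Y)| > |V(X) \ V(U)|`, and
`χ(X) = χ(U) + |V(X) \ V(U)| - |E(Y)|`.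
-/

open Finset

namespace SimpleGraph

variable {V : Type*}

lemma card_lt_card_edgeSet_of_two_le_degree [Fintype V] (G : SimpleGraph V) [DecidableRel G.Adj]
    (W : Finset V) (hW : ∀ w ∈ W, 2 ≤ G.degree w) {b : V} (hb : b ∉ W)
    (hdeg : 0 < G.degree b) :
    #W < Nat.card G.edgeSet := by
  rw [Nat.card_eq_fintype_card, card_edgeSet]
  classical
  have hsumW : #W • 2 ≤ ∑ v ∈ W, G.degree v := card_nsmul_le_sum W _ 2 hW
  have hsumWc : 0 < ∑ v ∈ Wᶜ, G.degree v :=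
    hdeg.trans_le <|
      single_le_sum (f := fun v => G.degree v) (fun _ _ => Nat.zero_le _) (mem_compl.2 hb)
  have hsplit := sum_add_sum_compl W fun v => G.degree v
  rw [sum_degrees_eq_twice_card_edges, smul_eq_mul] at *
  omega

namespace Subgraph

variable {G : SimpleGraph V} (U : G.Subgraph)

lemma neighborSet_sdiff_spanningCoe {v : V} (hv : v ∉ U.verts) :
    (G \ U.spanningCoe).neighborSet v = G.neighborSet v := by
  ext w
  exact ⟨And.left, fun h => ⟨h, fun hU => hv hU.fst_mem⟩⟩

lemma degree_sdiff_spanningCoe [Fintype V] [DecidableRel G.Adj]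
    [DecidableRel (G \ U.spanningCoe).Adj] {v : V} (hv : v ∉ U.verts) :
    (G \ U.spanningCoe).degree v = G.degree v := by
  simp only [← card_neighborSet_eq_degree]
  exact Fintype.card_congr (Equiv.setCongr (U.neighborSet_sdiff_spanningCoe hv))

lemma card_edgeSet_eq_add_card_sdiff_spanningCoe [Finite V] :
    Nat.card G.edgeSet = Nat.card U.edgeSet + Nat.card (G \ U.spanningCoe).edgeSet := by
  rw [edgeSet_sdiff, edgeSet_spanningCoe, Nat.card_coe_set_eq, Nat.card_coe_set_eq,
    Nat.card_coe_set_eq, ← Set.ncard_union_eq Set.disjoint_sdiff_right,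
    Set.union_sdiff_cancel U.edgeSet_subset]

lemma exists_adj_not_adj_mem_verts (hconn : G.Connected) (hne : U.verts.Nonempty)
    (hproper : U.edgeSet ≠ G.edgeSet) : ∃ a b, G.Adj a b ∧ ¬U.Adj a b ∧ b ∈ U.verts := by
  obtain ⟨e, heG, heU⟩ := Set.exists_of_ssubset (U.edgeSet_subset.ssubset_of_ne hproper)
  induction e using Sym2.ind with
  | _ a b =>
    by_cases hb : b ∈ U.verts
    · exact ⟨a, b, heG, heU, hb⟩
    · obtain ⟨u, hu⟩ := hne
      obtain ⟨p⟩ := hconn.preconnected b u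
      obtain ⟨d, -, hd, hd'⟩ := p.exists_boundary_dart {v | v ∉ U.verts} hb (· hu)
      exact ⟨d.fst, d.snd, d.adj, fun h => hd h.fst_mem, not_not.mp hd'⟩

end Subgraph

end SimpleGraph

/-- If `X` is a finite connected graph with no leaf vertices (every degree at least 2)
and `U` is a nonempty proper subgraph (missing at least one edge of `X`), then
`χ(X) < χ(U)`, where `χ` denotes the Euler characteristic (vertices minus edges). -/
theorem stmt_8 {α : Type*} [Fintype α] (X : SimpleGraph α) [DecidableRel X.Adj]
    (hconn : X.Connected) (hdeg : ∀ v, 2 ≤ X.degree v)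
    (U : X.Subgraph) (hne : U.verts.Nonempty) (hproper : U.edgeSet ≠ X.edgeSet) :
    (Fintype.card α : ℤ) - (Nat.card X.edgeSet : ℤ)
      < (Nat.card U.verts : ℤ) - (Nat.card U.edgeSet : ℤ) := by
  classical
  have hE := U.card_edgeSet_eq_add_card_sdiff_spanningCoe
  set Y := X \ U.spanningCoe
  obtain ⟨a, b, hXab, hUab, hb⟩ := U.exists_adj_not_adj_mem_verts hconn hne hproper
  have hW : ∀ w ∈ U.vertsᶜ.toFinset, 2 ≤ Y.degree w := fun w hw => by
    rw [U.degree_sdiff_spanningCoe (Set.mem_toFinset.1 hw)]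
    exact hdeg w
  have hbY : 0 < Y.degree b := Y.degree_pos_iff_exists_adj b |>.2 ⟨a, hXab.symm, (hUab ·.symm)⟩
  have hY := Y.card_lt_card_edgeSet_of_two_le_degree _ hW (by simpa using hb) hbY
  have hV : Fintype.card α = Nat.card U.verts + #U.vertsᶜ.toFinset := by
    rw [Nat.card_coe_set_eq, ← Set.ncard_eq_toFinset_card', Set.ncard_add_ncard_compl,
      Nat.card_eq_fintype_card]
  omega
end
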